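/- arXiv:2311.09515 — 4 statements merged into one kernel-verified Lean document; each statement's English description precedes it below -/
import Mathlib

section
/- Let (X,d) be a complete metric space, let n ≥ 2, and let f₁,…,fₙ : X → X be maps such that each fᵢ is Lipschitz with constant sᵢ < 1, with s₁ ≤ s₂ ≤ … ≤ sₙ. Let γᵢ be the unique fixed point of fᵢ and let M = max_{i,j∈{1,…,n}} d(γᵢ,γⱼ). If A is a nonempty compact subset of X with A = ⋃ᵢ fᵢ(A), then A ⊆ (⋃_{i=1}^{n−1} B[γᵢ, M sᵢ (1+sₙ)/(1−s_{n−1} sₙ)]) ∪ B[γₙ, M sₙ (1+s_{n−1})/(1−s_{n−1} sₙ)], where B[x,r] = {y ∈ X : d(y,x) ≤ r} is the closed ball of center x and radius r. -/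
/-!
Put `φ x = minᵢ (d(x, γᵢ) - Rᵢ)`, so that `φ x ≤ 0` says that `x` lies in one of the balls
`B[γᵢ, Rᵢ]`. If the radii satisfy `sᵢ (Rₖ + d(γₖ, γᵢ)) ≤ Rᵢ` for all `i, k`, then comparing
`d(fᵢ y, γᵢ) ≤ sᵢ d(y, γᵢ)` with the index `k` realising `φ y` gives `φ (fᵢ y) ≤ sᵢ φ y`.
At a maximiser `x = fᵢ y` of `φ` on the compact set `A` this reads `φ x ≤ sᵢ φ y ≤ sᵢ φ x`,
so `φ x ≤ 0` and `A` is covered. The stated radii satisfy the condition because, with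
`a = s_{n-1}` and `b = sₙ`, `Rₖ + M ≤ M (1 + a) / (1 - a b)` for `k < n` and
`Rₙ + M = M (1 + b) / (1 - a b)`.
-/

open Metric Finset

section InvariantBalls

variable {X ι : Type*} [PseudoMetricSpace X] [Fintype ι] [Nonempty ι]

noncomputable def ballExcess (γ : ι → X) (R : ι → ℝ) (x : X) : ℝ :=
  univ.inf' univ_nonempty fun i => dist x (γ i) - R i

variable (γ : ι → X) (R : ι → ℝ)

lemma ballExcess_le (x : X) (i : ι) : ballExcess γ R x ≤ dist x (γ i) - R i :=
  inf'_le _ (mem_univ i)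

lemma exists_ballExcess_eq (x : X) : ∃ i, ballExcess γ R x = dist x (γ i) - R i := by
  obtain ⟨i, -, h⟩ := exists_mem_eq_inf' univ_nonempty fun i => dist x (γ i) - R i
  exact ⟨i, h⟩

lemma continuous_ballExcess : Continuous (ballExcess γ R) :=
  Continuous.finset_inf'_apply _ fun _ _ =>
    (continuous_id.dist continuous_const).sub continuous_const

lemma mem_iUnion_closedBall_of_ballExcess_nonpos {x : X} (h : ballExcess γ R x ≤ 0) :
    x ∈ ⋃ i, closedBall (γ i) (R i) := by
  obtain ⟨i, hi⟩ := exists_ballExcess_eq γ R x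
  exact Set.mem_iUnion.2 ⟨i, mem_closedBall.2 (by linarith)⟩

lemma ballExcess_map_le {g : X → X} {t : ℝ} {i : ι} (ht : 0 ≤ t)
    (hg : ∀ p q, dist (g p) (g q) ≤ t * dist p q) (hγ : g (γ i) = γ i)
    (hR : ∀ k, t * (R k + dist (γ k) (γ i)) ≤ R i) (y : X) :
    ballExcess γ R (g y) ≤ t * ballExcess γ R y := by
  obtain ⟨k, hk⟩ := exists_ballExcess_eq γ R y
  calc ballExcess γ R (g y) ≤ dist (g y) (γ i) - R i := ballExcess_le γ R _ i
    _ ≤ t * dist y (γ i) - R i := by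
      have h := hg y (γ i)
      rw [hγ] at h
      linarith
    _ ≤ t * (dist y (γ k) + dist (γ k) (γ i)) - R i := by gcongr; exact dist_triangle _ _ _
    _ ≤ t * (dist y (γ k) - R k) := by linarith [hR k]
    _ = t * ballExcess γ R y := by rw [hk]

theorem subset_iUnion_closedBall_of_subset_iUnion_image
    {f : ι → X → X} {s : ι → ℝ} {A : Set X}
    (hs0 : ∀ i, 0 ≤ s i) (hs1 : ∀ i, s i < 1)
    (hf : ∀ i p q, dist (f i p) (f i q) ≤ s i * dist p q) (hγ : ∀ i, f i (γ i) = γ i)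
    (hR : ∀ i k, s i * (R k + dist (γ k) (γ i)) ≤ R i)
    (hAc : IsCompact A) (hAf : A ⊆ ⋃ i, f i '' A) :
    A ⊆ ⋃ i, closedBall (γ i) (R i) := by
  rcases A.eq_empty_or_nonempty with rfl | hA
  · exact Set.empty_subset _
  obtain ⟨x, hxA, hmax⟩ := hAc.exists_isMaxOn hA (continuous_ballExcess γ R).continuousOn
  suffices hx : ballExcess γ R x ≤ 0 from
    fun z hz => mem_iUnion_closedBall_of_ballExcess_nonpos γ R ((hmax hz).trans hx)
  obtain ⟨i, y, hyA, rfl⟩ := Set.mem_iUnion.1 (hAf hxA)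
  have hcontract := ballExcess_map_le γ R (hs0 i) (hf i) (hγ i) (hR i) y
  have hy : ballExcess γ R y ≤ ballExcess γ R (f i y) := hmax hyA
  nlinarith [hs1 i, hs0 i]

end InvariantBalls

lemma nonneg_of_dist_le_mul {X : Type*} [MetricSpace X] [Nontrivial X] {g : X → X} {t : ℝ}
    (hg : ∀ p q, dist (g p) (g q) ≤ t * dist p q) : 0 ≤ t := by
  obtain ⟨p, q, hpq⟩ := exists_pair_ne X
  exact nonneg_of_mul_nonneg_left (dist_nonneg.trans (hg p q)) (dist_pos.2 hpq)

section CoverRadius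

variable {n : ℕ} (s : Fin (n + 2) → ℝ) (M : ℝ)

noncomputable def coverRadius : Fin (n + 2) → ℝ :=
  Fin.lastCases
    (M * s (Fin.last (n + 1)) * (1 + s (Fin.last n).castSucc) /
      (1 - s (Fin.last n).castSucc * s (Fin.last (n + 1))))
    fun j => M * s j.castSucc * (1 + s (Fin.last (n + 1))) /
      (1 - s (Fin.last n).castSucc * s (Fin.last (n + 1)))

variable {s M}

lemma one_sub_mul_last_pos (hs0 : ∀ i, 0 ≤ s i) (hs1 : ∀ i, s i < 1) :
    0 < 1 - s (Fin.last n).castSucc * s (Fin.last (n + 1)) :=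
  sub_pos.2 (mul_lt_one_of_nonneg_of_lt_one_left (hs0 _) (hs1 _) (hs1 _).le)

lemma coverRadius_castSucc_add_le (hs0 : ∀ i, 0 ≤ s i) (hs1 : ∀ i, s i < 1)
    (hmono : Monotone s) (hM : 0 ≤ M) (j : Fin (n + 1)) :
    coverRadius s M j.castSucc + M ≤
      M * (1 + s (Fin.last n).castSucc) / (1 - s (Fin.last n).castSucc * s (Fin.last (n + 1))) := by
  have hD := one_sub_mul_last_pos hs0 hs1
  have hj : s j.castSucc ≤ s (Fin.last n).castSucc :=
    hmono (Fin.castSucc_le_castSucc_iff.2 j.le_last)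
  rw [coverRadius, Fin.lastCases_castSucc, div_add' _ _ _ hD.ne', div_le_div_iff_of_pos_right hD]
  have hb : 0 ≤ 1 + s (Fin.last (n + 1)) := by linarith [hs0 (Fin.last (n + 1))]
  linarith [mul_le_mul_of_nonneg_right (mul_le_mul_of_nonneg_left hj hM) hb]

lemma coverRadius_last_add (hD : 1 - s (Fin.last n).castSucc * s (Fin.last (n + 1)) ≠ 0) :
    coverRadius s M (Fin.last (n + 1)) + M =
      M * (1 + s (Fin.last (n + 1))) / (1 - s (Fin.last n).castSucc * s (Fin.last (n + 1))) := by
  rw [coverRadius, Fin.lastCases_last, div_add' _ _ _ hD, div_left_inj' hD]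
  ring

lemma coverRadius_add_le (hs0 : ∀ i, 0 ≤ s i) (hs1 : ∀ i, s i < 1) (hmono : Monotone s)
    (hM : 0 ≤ M) (k : Fin (n + 2)) :
    coverRadius s M k + M ≤
      M * (1 + s (Fin.last (n + 1))) / (1 - s (Fin.last n).castSucc * s (Fin.last (n + 1))) := by
  have hD := one_sub_mul_last_pos hs0 hs1
  induction k using Fin.lastCases with
  | last => exact (coverRadius_last_add hD.ne').le
  | cast l =>
    refine (coverRadius_castSucc_add_le hs0 hs1 hmono hM l).trans ?_
    gcongr
    exact hmono (Fin.le_last _)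

lemma mul_coverRadius_add_dist_le {X : Type*} [PseudoMetricSpace X] {γ : Fin (n + 2) → X}
    (hs0 : ∀ i, 0 ≤ s i) (hs1 : ∀ i, s i < 1) (hmono : Monotone s)
    (hM : ∀ i k, dist (γ i) (γ k) ≤ M) (i k : Fin (n + 2)) :
    s i * (coverRadius s M k + dist (γ k) (γ i)) ≤ coverRadius s M i := by
  have hM0 : 0 ≤ M := dist_self (γ 0) ▸ hM 0 0
  induction i using Fin.lastCases with
  | cast j =>
    calc _ ≤ s j.castSucc * (coverRadius s M k + M) := by gcongr; exacts [hs0 _, hM k _]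
      _ ≤ _ := mul_le_mul_of_nonneg_left (coverRadius_add_le hs0 hs1 hmono hM0 k) (hs0 _)
      _ = coverRadius s M j.castSucc := by rw [coverRadius, Fin.lastCases_castSucc]; ring
  | last =>
    induction k using Fin.lastCases with
    | last =>
      rw [dist_self, add_zero]
      refine mul_le_of_le_one_left ?_ (hs1 _).le
      rw [coverRadius, Fin.lastCases_last]
      have ha := hs0 (Fin.last n).castSucc
      exact div_nonneg (mul_nonneg (mul_nonneg hM0 (hs0 _)) (by linarith))
        (one_sub_mul_last_pos hs0 hs1).le
    | cast l =>
      calc _ ≤ s (Fin.last (n + 1)) * (coverRadius s M l.castSucc + M) := by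
            gcongr; exacts [hs0 _, hM _ _]
        _ ≤ _ :=
          mul_le_mul_of_nonneg_left (coverRadius_castSucc_add_le hs0 hs1 hmono hM0 l) (hs0 _)
        _ = coverRadius s M (Fin.last (n + 1)) := by rw [coverRadius, Fin.lastCases_last]; ring

end CoverRadius

theorem attractor_subset_union_closedBalls_general
    {X : Type*} [MetricSpace X]
    (n : ℕ) (f : Fin (n + 2) → X → X) (s : Fin (n + 2) → ℝ)
    (hs : ∀ i, s i < 1)
    (hf : ∀ i, ∀ p q : X, dist (f i p) (f i q) ≤ s i * dist p q)
    (hmono : Monotone s)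
    (γ : Fin (n + 2) → X) (hγ : ∀ i, f i (γ i) = γ i)
    (M : ℝ) (hM : M = ⨆ p : Fin (n + 2) × Fin (n + 2), dist (γ p.1) (γ p.2))
    (A : Set X) (hAc : IsCompact A)
    (hAfix : A = ⋃ i, f i '' A) :
    A ⊆ (⋃ i : Fin (n + 1), Metric.closedBall (γ i.castSucc)
            (M * s i.castSucc * (1 + s (Fin.last (n + 1))) /
              (1 - s ((Fin.last n).castSucc) * s (Fin.last (n + 1))))) ∪
        Metric.closedBall (γ (Fin.last (n + 1)))
          (M * s (Fin.last (n + 1)) * (1 + s ((Fin.last n).castSucc)) /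
            (1 - s ((Fin.last n).castSucc) * s (Fin.last (n + 1)))) := by
  rcases subsingleton_or_nontrivial X with hX | hX
  · -- the `s i` need not be nonnegative here, but `M = 0` makes every radius `0`
    have hzero : ∀ x y : X, dist x y = 0 := fun x y => dist_eq_zero.2 (Subsingleton.elim x y)
    exact fun x _ => Or.inr (mem_closedBall.2 (by simp [hM, hzero]))
  have hdist : ∀ i k, dist (γ i) (γ k) ≤ M := fun i k =>
    hM ▸ le_ciSup (f := fun p : Fin (n + 2) × Fin (n + 2) => dist (γ p.1) (γ p.2))
      (Set.finite_range _).bddAbove (i, k)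
  have hs0 : ∀ i, 0 ≤ s i := fun i => nonneg_of_dist_le_mul (hf i)
  have hcover := subset_iUnion_closedBall_of_subset_iUnion_image γ (coverRadius s M) hs0 hs hf hγ
    (mul_coverRadius_add_dist_le hs0 hs hmono hdist) hAc hAfix.subset
  simpa only [Set.iUnion_fin_add_one_eq_iUnion_castSucc, Function.comp_def, coverRadius,
    Fin.lastCases_castSucc, Fin.lastCases_last] using hcover

/-- (Theorem 3.1 of [locHBfrct].)  Let `(X,d)` be a complete metric
space, and `f₀, …, f_{n+1} : X → X` (that is, `n+2 ≥ 2` maps) with each `fᵢ`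
Lipschitz with constant `sᵢ < 1` and `s₀ ≤ s₁ ≤ … ≤ s_{n+1}`.  Let `γᵢ` be the fixed
point of `fᵢ` and `M = maxᵢⱼ d(γᵢ, γⱼ)`.  If `A` is nonempty compact with
`A = ⋃ᵢ fᵢ(A)`, then `A` is covered by the closed balls
`B[γᵢ, M sᵢ (1+s_last)/(1 − s_secondlast s_last)]` for `i < n+1` together with
`B[γ_last, M s_last (1+s_secondlast)/(1 − s_secondlast s_last)]`. -/
theorem attractor_subset_union_closedBalls
    {X : Type*} [MetricSpace X] [CompleteSpace X]
    (n : ℕ) (f : Fin (n + 2) → X → X) (s : Fin (n + 2) → ℝ)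
    (hs : ∀ i, s i < 1)
    (hf : ∀ i, ∀ p q : X, dist (f i p) (f i q) ≤ s i * dist p q)
    (hmono : Monotone s)
    (γ : Fin (n + 2) → X) (hγ : ∀ i, f i (γ i) = γ i)
    (M : ℝ) (hM : M = ⨆ p : Fin (n + 2) × Fin (n + 2), dist (γ p.1) (γ p.2))
    (A : Set X) (hA : A.Nonempty) (hAc : IsCompact A)
    (hAfix : A = ⋃ i, f i '' A) :
    A ⊆ (⋃ i : Fin (n + 1), Metric.closedBall (γ i.castSucc)
            (M * s i.castSucc * (1 + s (Fin.last (n + 1))) /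
              (1 - s ((Fin.last n).castSucc) * s (Fin.last (n + 1))))) ∪
        Metric.closedBall (γ (Fin.last (n + 1)))
          (M * s (Fin.last (n + 1)) * (1 + s ((Fin.last n).castSucc)) /
            (1 - s ((Fin.last n).castSucc) * s (Fin.last (n + 1)))) :=
  attractor_subset_union_closedBalls_general n f s hs hf hmono γ hγ M hM A hAc hAfix
end

section
/- Let θ > 0 and let a, c, d ∈ ℝ with a ≥ 0, d > 0 and c > 0. Then sup { (a − θc − θ d t)/(1 − θ t) : t ∈ ℝ, t ≤ −c/d } equals a d/(d + θ c) if a − θc > d, and equals d if a − θc ≤ d. -/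
open Filter Topology

/-!
On the ray `t ≤ -c/d` the denominator satisfies `1 - θ t ≥ (d + θ c)/d > 0`, and the quotient is
`d + (a - θ c - d)/(1 - θ t)`. If `a - θ c ≤ d` it stays below `d` and tends to `d` as `t → -∞`;
otherwise it is largest where the denominator is smallest, at `t = -c/d`.
-/

section

variable {θ c d t : ℝ}

lemma div_le_one_sub_mul_of_le_neg_div (hθ : 0 ≤ θ) (hd : 0 < d) (ht : t ≤ -c / d) :
    (d + θ * c) / d ≤ 1 - θ * t := by
  have : θ * t ≤ θ * (-c / d) := mul_le_mul_of_nonneg_left ht hθ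
  calc (d + θ * c) / d = 1 - θ * (-c / d) := by field_simp; ring
    _ ≤ 1 - θ * t := by linarith

lemma div_one_sub_mul_eq_add_div (b : ℝ) (h : 1 - θ * t ≠ 0) :
    (b - θ * d * t) / (1 - θ * t) = d + (b - d) / (1 - θ * t) := by
  field_simp
  ring

lemma tendsto_div_one_sub_mul_atBot (hθ : 0 < θ) (b d : ℝ) :
    Tendsto (fun t => (b - θ * d * t) / (1 - θ * t)) atBot (𝓝 d) := by
  have hden : Tendsto (fun t => 1 - θ * t) atBot atTop :=
    tendsto_atTop_add_const_left _ 1 <|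
      (tendsto_neg_atBot_atTop.const_mul_atTop hθ).congr fun t => by ring
  have hlim : Tendsto (fun t => d + (b - d) / (1 - θ * t)) atBot (𝓝 d) := by
    simpa using (tendsto_const_nhds.div_atTop hden).const_add d
  refine hlim.congr' ?_
  filter_upwards [hden.eventually_gt_atTop 0] with t ht
  exact (div_one_sub_mul_eq_add_div b ht.ne').symm

end

theorem sup_N3_eq_general
    (θ a c d : ℝ) (hθ : 0 < θ) (hd : 0 < d) (hc : 0 < c) :
    sSup {y : ℝ | ∃ t : ℝ, t ≤ -c / d ∧ y = (a - θ * c - θ * d * t) / (1 - θ * t)} =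
      if a - θ * c ≤ d then d else a * d / (d + θ * c) := by
  have hsum : 0 < d + θ * c := by positivity
  have hs₀ : 0 < (d + θ * c) / d := div_pos hsum hd
  have hden : ∀ t ≤ -c / d, (d + θ * c) / d ≤ 1 - θ * t := fun t ht =>
    div_le_one_sub_mul_of_le_neg_div hθ.le hd ht
  have hval : ∀ t ≤ -c / d, (a - θ * c - θ * d * t) / (1 - θ * t) =
      d + (a - θ * c - d) / (1 - θ * t) := fun t ht =>
    div_one_sub_mul_eq_add_div _ (hs₀.trans_le (hden t ht)).ne'
  split_ifs with h
  · refine IsLUB.csSup_eq ⟨?_, fun b hb => ?_⟩ ⟨_, -c / d, le_rfl, rfl⟩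
    · rintro _ ⟨t, ht, rfl⟩
      rw [hval t ht]
      exact add_le_of_nonpos_right <|
        div_nonpos_of_nonpos_of_nonneg (by linarith) (hs₀.le.trans (hden t ht))
    · refine le_of_tendsto (tendsto_div_one_sub_mul_atBot hθ (a - θ * c) d) ?_
      filter_upwards [eventually_le_atBot (-c / d)] with t ht using hb ⟨t, ht, rfl⟩
  · refine IsGreatest.csSup_eq ⟨⟨-c / d, le_rfl, ?_⟩, ?_⟩
    · field_simp [hsum.ne']
      ring
    · rintro _ ⟨t, ht, rfl⟩
      calc (a - θ * c - θ * d * t) / (1 - θ * t) = d + (a - θ * c - d) / (1 - θ * t) := hval t ht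
        _ ≤ d + (a - θ * c - d) / ((d + θ * c) / d) := by
          gcongr
          · linarith
          · exact hden t ht
        _ = a * d / (d + θ * c) := by field_simp; ring

/-- For `θ > 0`, `a ≥ 0`, `d > 0`, `c > 0`:
`sup { (a − θc − θ d t)/(1 − θ t) : t ≤ −c/d }` equals `a d/(d + θ c)` if
`a − θc > d`, and equals `d` if `a − θc ≤ d`. -/
theorem sup_N3_eq
    (θ a c d : ℝ) (hθ : 0 < θ) (ha : 0 ≤ a) (hd : 0 < d) (hc : 0 < c) :
    sSup {y : ℝ | ∃ t : ℝ, t ≤ -c / d ∧ y = (a - θ * c - θ * d * t) / (1 - θ * t)} =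
      if a - θ * c ≤ d then d else a * d / (d + θ * c) :=
  sup_N3_eq_general θ a c d hθ hd hc
end

section
/- In the affine FIF framework with n ≥ 2 interpolation points x₀ < … < xₙ and scaling factors d_k ∈ [0,1), there exists a continuous function f : [x₀, xₙ] → ℝ such that f(x_k) = y_k for all k ∈ {0,1,…,n} and whose graph G_f = {(x, f(x)) : x ∈ [x₀,xₙ]} satisfies G_f = ⋃_{k=1}^{n} f_k(G_f); that is, G_f is the attractor of the iterated function system (f₁,…,fₙ) on ℝ². -/
/-!
The interpolant is the fixed point of the Read–Bajraktarević operator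
`(T g)(s) = F_k(ℓ_k s, g(ℓ_k s))` for `s ∈ [x_{k-1}, x_k]`, where `ℓ_k` inverts the abscissa map
`L_k t = a_k t + b_k` and `F_k(t, u) = c_k t + d_k u + e_k`. On continuous functions on
`[x₀, xₙ]` with the prescribed values at `x₀` and `xₙ`, neighbouring pieces of `T g` agree at the
nodes, so `T g` is again such a function, and `T` contracts the sup distance by `max d_k < 1`.
The fixed point satisfies `g(L_k t) = F_k(t, g t)`, i.e. `f_k` maps the graph of `g` onto its
part over `[x_{k-1}, x_k]`, and these parts cover the graph.
-/

open Set Function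

noncomputable def glue {ι α β : Type*} [Nonempty ι] (I : ι → Set α) (φ : ι → α → β) (s : α) :
    β :=
  φ (Classical.epsilon fun i => s ∈ I i) s

section Glue

variable {ι α β : Type*} [Nonempty ι] {I : ι → Set α} {φ : ι → α → β} {s : α}

theorem glue_eq_of_mem (hφ : ∀ i j, ∀ s ∈ I i, s ∈ I j → φ i s = φ j s) {i : ι}
    (hs : s ∈ I i) : glue I φ s = φ i s :=
  hφ _ _ _ (Classical.epsilon_spec (p := fun i => s ∈ I i) ⟨i, hs⟩) hs

theorem continuousOn_glue [TopologicalSpace α] [TopologicalSpace β] [Finite ι]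
    (hI : ∀ i, IsClosed (I i)) (hφ : ∀ i j, ∀ s ∈ I i, s ∈ I j → φ i s = φ j s)
    (hφc : ∀ i, ContinuousOn (φ i) (I i)) : ContinuousOn (glue I φ) (⋃ i, I i) :=
  (locallyFinite_of_finite I).continuousOn_iUnion hI fun i =>
    (hφc i).congr fun _ hs => glue_eq_of_mem hφ hs

theorem dist_glue_le [PseudoMetricSpace β] {ψ : ι → α → β} {C : ℝ}
    (h : ∀ i, dist (φ i s) (ψ i s) ≤ C) : dist (glue I φ s) (glue I ψ s) ≤ C :=
  h _

end Glue

section Partition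

variable {α : Type*} [LinearOrder α] {m : ℕ} {x : Fin (m + 1) → α}

theorem Monotone.iUnion_Icc_castSucc_succ [NeZero m] (hx : Monotone x) :
    ⋃ k : Fin m, Icc (x k.castSucc) (x k.succ) = Icc (x 0) (x (Fin.last m)) := by
  refine Subset.antisymm
    (iUnion_subset fun k => Icc_subset_Icc (hx (Fin.zero_le _)) (hx (Fin.le_last _))) ?_
  rintro s ⟨h0, hN⟩
  suffices ∀ i : Fin (m + 1), s ≤ x i → s ∈ ⋃ k : Fin m, Icc (x k.castSucc) (x k.succ) from
    this _ hN
  intro i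
  induction i using Fin.induction with
  | zero =>
    intro h
    refine mem_iUnion.2 ⟨0, ?_, h.trans (hx (Fin.zero_le _))⟩
    rwa [Fin.castSucc_zero]
  | succ k ih =>
    intro h
    rcases le_or_gt s (x k.castSucc) with h' | h'
    · exact ih h'
    · exact mem_iUnion.2 ⟨k, h'.le, h⟩

theorem StrictMono.succ_eq_castSucc_of_mem_Icc (hx : StrictMono x) {k j : Fin m} (hkj : k < j)
    {s : α} (hk : s ∈ Icc (x k.castSucc) (x k.succ)) (hj : s ∈ Icc (x j.castSucc) (x j.succ)) :
    k.succ = j.castSucc ∧ s = x k.succ := by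
  have hle : x k.succ ≤ x j.castSucc := hx.monotone (Fin.succ_le_castSucc_iff.2 hkj)
  have hnode : x k.succ = x j.castSucc := le_antisymm hle (hj.1.trans hk.2)
  exact ⟨hx.injective hnode, le_antisymm hk.2 (hle.trans hj.1)⟩

end Partition

theorem affine_two_point_eval {A B u v a b : ℝ} (hAB : A ≠ B) (ha : a = (v - u) / (B - A))
    (hb : b = (B * u - A * v) / (B - A)) : a * A + b = u ∧ a * B + b = v := by
  have : B - A ≠ 0 := sub_ne_zero.2 hAB.symm
  subst ha hb
  constructor <;> field_simp <;> ring

theorem exists_nnreal_lt_one_forall_le {ι : Type*} [Fintype ι] {d : ι → ℝ} (hd : ∀ i, d i < 1) :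
    ∃ K : NNReal, K < 1 ∧ ∀ i, d i ≤ K :=
  ⟨Finset.univ.sup fun i => (d i).toNNReal,
    (Finset.sup_lt_iff zero_lt_one).2 fun i _ => Real.toNNReal_lt_one.2 (hd i),
    fun i => (Real.le_coe_toNNReal _).trans <| NNReal.coe_le_coe.2 <|
      Finset.le_sup (f := fun i => (d i).toNNReal) (Finset.mem_univ i)⟩

theorem lipschitzWith_add_mul_add {p q r : ℝ} {K : NNReal} (hq : |q| ≤ K) :
    LipschitzWith K fun u => p + q * u + r :=
  LipschitzWith.of_dist_le_mul fun u v => by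
    rw [Real.dist_eq, Real.dist_eq, show p + q * u + r - (p + q * v + r) = q * (u - v) by ring,
      abs_mul]
    exact mul_le_mul_of_nonneg_right hq (abs_nonneg _)

theorem image_graph_eq_iUnion_image {ι α β : Type*} {g : α → β} {J : Set α} {L : ι → α → α}
    {f : ι → α × β → α × β} (hL : ⋃ i, L i '' J = J)
    (hf : ∀ i, ∀ t ∈ J, f i (t, g t) = (L i t, g (L i t))) :
    (fun t => (t, g t)) '' J = ⋃ i, f i '' ((fun t => (t, g t)) '' J) := by
  calc (fun t => (t, g t)) '' J = (fun t => (t, g t)) '' ⋃ i, L i '' J := by rw [hL]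
    _ = ⋃ i, (fun t => (L i t, g (L i t))) '' J := by simp_rw [image_iUnion, image_image]
    _ = ⋃ i, f i '' ((fun t => (t, g t)) '' J) := by
      simp_rw [image_image]
      exact iUnion_congr fun i => image_congr fun t ht => (hf i t ht).symm

section ReadBajraktarevic

variable {m : ℕ} {x y : Fin (m + 1) → ℝ} {ℓ : Fin m → ℝ → ℝ} {F : Fin m → ℝ → ℝ → ℝ}
  {g : ℝ → ℝ} {k : Fin m}

/-- Barnsley's join-up conditions, with `ℓ k` standing for the inverse of the `k`-th abscissa
map. -/
structure JoinUp (x y : Fin (m + 1) → ℝ) (ℓ : Fin m → ℝ → ℝ) (F : Fin m → ℝ → ℝ → ℝ) : Prop where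
  strictMono : StrictMono x
  chart_castSucc : ∀ k, ℓ k (x k.castSucc) = x 0
  chart_succ : ∀ k, ℓ k (x k.succ) = x (Fin.last m)
  map_left : ∀ k, F k (x 0) (y 0) = y k.castSucc
  map_right : ∀ k, F k (x (Fin.last m)) (y (Fin.last m)) = y k.succ

def rbPiece (ℓ : Fin m → ℝ → ℝ) (F : Fin m → ℝ → ℝ → ℝ) (g : ℝ → ℝ) (k : Fin m) (s : ℝ) : ℝ :=
  F k (ℓ k s) (g (ℓ k s))

noncomputable def readBajraktarevic [NeZero m] (x : Fin (m + 1) → ℝ) (ℓ : Fin m → ℝ → ℝ)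
    (F : Fin m → ℝ → ℝ → ℝ) (g : ℝ → ℝ) : ℝ → ℝ :=
  glue (fun k => Icc (x k.castSucc) (x k.succ)) (rbPiece ℓ F g)

theorem dist_readBajraktarevic_le [NeZero m] {K : NNReal} (hF : ∀ k t, LipschitzWith K (F k t))
    {g' : ℝ → ℝ} {C : ℝ} (hC : ∀ u, dist (g u) (g' u) ≤ C) (s : ℝ) :
    dist (readBajraktarevic x ℓ F g s) (readBajraktarevic x ℓ F g' s) ≤ K * C :=
  dist_glue_le fun k => ((hF k _).dist_le_mul _ _).trans (mul_le_mul_of_nonneg_left (hC _) K.2)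

namespace JoinUp

theorem rbPiece_castSucc (h : JoinUp x y ℓ F) (hgA : g (x 0) = y 0) :
    rbPiece ℓ F g k (x k.castSucc) = y k.castSucc := by
  rw [rbPiece, h.chart_castSucc, hgA, h.map_left]

theorem rbPiece_succ (h : JoinUp x y ℓ F) (hgB : g (x (Fin.last m)) = y (Fin.last m)) :
    rbPiece ℓ F g k (x k.succ) = y k.succ := by
  rw [rbPiece, h.chart_succ, hgB, h.map_right]

theorem rbPiece_eq_of_mem_inter (h : JoinUp x y ℓ F) (hgA : g (x 0) = y 0)
    (hgB : g (x (Fin.last m)) = y (Fin.last m)) :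
    ∀ i j, ∀ s ∈ Icc (x i.castSucc) (x i.succ), s ∈ Icc (x j.castSucc) (x j.succ) →
      rbPiece ℓ F g i s = rbPiece ℓ F g j s := by
  suffices hlt : ∀ i j, i < j → ∀ s ∈ Icc (x i.castSucc) (x i.succ),
      s ∈ Icc (x j.castSucc) (x j.succ) → rbPiece ℓ F g i s = rbPiece ℓ F g j s by
    intro i j s hi hj
    rcases lt_trichotomy i j with hij | rfl | hji
    exacts [hlt i j hij s hi hj, rfl, (hlt j i hji s hj hi).symm]
  intro i j hij s hi hj
  obtain ⟨hnode, rfl⟩ := h.strictMono.succ_eq_castSucc_of_mem_Icc hij hi hj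
  rw [h.rbPiece_succ hgB, hnode, ← h.rbPiece_castSucc hgA]

variable [NeZero m]

theorem readBajraktarevic_eq (h : JoinUp x y ℓ F) (hgA : g (x 0) = y 0)
    (hgB : g (x (Fin.last m)) = y (Fin.last m)) {s : ℝ}
    (hs : s ∈ Icc (x k.castSucc) (x k.succ)) :
    readBajraktarevic x ℓ F g s = rbPiece ℓ F g k s :=
  glue_eq_of_mem (h.rbPiece_eq_of_mem_inter hgA hgB) hs

theorem readBajraktarevic_apply_node (h : JoinUp x y ℓ F) (hgA : g (x 0) = y 0)
    (hgB : g (x (Fin.last m)) = y (Fin.last m)) (i : Fin (m + 1)) :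
    readBajraktarevic x ℓ F g (x i) = y i := by
  rcases Fin.eq_zero_or_eq_succ i with rfl | ⟨k, rfl⟩
  · have hmem : x 0 ∈ Icc (x (0 : Fin m).castSucc) (x (0 : Fin m).succ) := by
      rw [Fin.castSucc_zero]
      exact ⟨le_rfl, h.strictMono.monotone (Fin.zero_le _)⟩
    rw [h.readBajraktarevic_eq hgA hgB hmem, ← Fin.castSucc_zero, h.rbPiece_castSucc hgA]
  · have hmem : x k.succ ∈ Icc (x k.castSucc) (x k.succ) :=
      right_mem_Icc.2 (h.strictMono.monotone (Fin.castSucc_le_succ k))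
    rw [h.readBajraktarevic_eq hgA hgB hmem, h.rbPiece_succ hgB]

theorem continuousOn_readBajraktarevic (h : JoinUp x y ℓ F) (hgA : g (x 0) = y 0)
    (hgB : g (x (Fin.last m)) = y (Fin.last m))
    (hℓc : ∀ k, ContinuousOn (ℓ k) (Icc (x k.castSucc) (x k.succ)))
    (hℓm : ∀ k, MapsTo (ℓ k) (Icc (x k.castSucc) (x k.succ)) (Icc (x 0) (x (Fin.last m))))
    (hFc : ∀ k, Continuous (uncurry (F k))) (hg : ContinuousOn g (Icc (x 0) (x (Fin.last m)))) :
    ContinuousOn (readBajraktarevic x ℓ F g) (Icc (x 0) (x (Fin.last m))) := by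
  rw [← h.strictMono.monotone.iUnion_Icc_castSucc_succ]
  refine continuousOn_glue (fun _ => isClosed_Icc) (h.rbPiece_eq_of_mem_inter hgA hgB)
    fun k => ?_
  exact (hFc k).comp_continuousOn ((hℓc k).prodMk (hg.comp (hℓc k) (hℓm k)))

theorem exists_fixedPoint_readBajraktarevic (h : JoinUp x y ℓ F)
    (hℓc : ∀ k, ContinuousOn (ℓ k) (Icc (x k.castSucc) (x k.succ)))
    (hℓm : ∀ k, MapsTo (ℓ k) (Icc (x k.castSucc) (x k.succ)) (Icc (x 0) (x (Fin.last m))))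
    (hFc : ∀ k, Continuous (uncurry (F k))) {K : NNReal} (hK : K < 1)
    (hF : ∀ k t, LipschitzWith K (F k t)) :
    ∃ g : ℝ → ℝ, ContinuousOn g (Icc (x 0) (x (Fin.last m))) ∧ g (x 0) = y 0 ∧
      g (x (Fin.last m)) = y (Fin.last m) ∧
      EqOn g (readBajraktarevic x ℓ F g) (Icc (x 0) (x (Fin.last m))) := by
  have hlt : x 0 < x (Fin.last m) := h.strictMono Fin.last_pos'
  let ext : C(Icc (x 0) (x (Fin.last m)), ℝ) → ℝ → ℝ := fun g => IccExtend hlt.le g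
  have hext (g : C(Icc (x 0) (x (Fin.last m)), ℝ)) :
      ContinuousOn (ext g) (Icc (x 0) (x (Fin.last m))) :=
    (continuous_IccExtend_iff.2 g.continuous).continuousOn
  let S : Set C(Icc (x 0) (x (Fin.last m)), ℝ) :=
    {g | ext g (x 0) = y 0 ∧ ext g (x (Fin.last m)) = y (Fin.last m)}
  have : IsClosed S :=
    (isClosed_eq (continuous_eval_const _) continuous_const).inter
      (isClosed_eq (continuous_eval_const _) continuous_const)
  have : Nonempty S := by
    let slope := (y (Fin.last m) - y 0) / (x (Fin.last m) - x 0)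
    refine ⟨⟨⟨fun t => y 0 + slope * (t - x 0), by fun_prop⟩, ?_, ?_⟩⟩
    · simp [ext, IccExtend_left]
    · simp only [ext, IccExtend_right, ContinuousMap.coe_mk, slope]
      field_simp [sub_ne_zero.2 hlt.ne']
      ring
  let T : S → S := fun g =>
    ⟨⟨(Icc (x 0) (x (Fin.last m))).domRestrict (readBajraktarevic x ℓ F (ext g)),
      (h.continuousOn_readBajraktarevic g.2.1 g.2.2 hℓc hℓm hFc (hext g)).domRestrict⟩,
      (IccExtend_left _ _).trans (h.readBajraktarevic_apply_node g.2.1 g.2.2 0),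
      (IccExtend_right _ _).trans (h.readBajraktarevic_apply_node g.2.1 g.2.2 (Fin.last m))⟩
  have hT : ContractingWith K T := by
    refine ⟨hK, LipschitzWith.of_dist_le_mul fun g g' => ?_⟩
    rw [Subtype.dist_eq, ContinuousMap.dist_le (by positivity)]
    exact fun s => dist_readBajraktarevic_le hF
      (fun u => ContinuousMap.dist_apply_le_dist (projIcc _ _ hlt.le u)) s
  obtain ⟨g, hg⟩ : ∃ g, T g = g := ⟨_, hT.fixedPoint_isFixedPt⟩
  refine ⟨ext g, hext g, g.2.1, g.2.2, fun s hs => ?_⟩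
  rw [show ext g s = g.1 ⟨s, hs⟩ from IccExtend_of_mem _ _ hs]
  conv_lhs => rw [← hg]
  rfl

end JoinUp

end ReadBajraktarevic

section Affine

variable {m : ℕ} [NeZero m] {x y : Fin (m + 1) → ℝ} {a b : Fin m → ℝ}

theorem iUnion_image_affine_Icc (hx : Monotone x) (ha : ∀ k, 0 < a k)
    (hL0 : ∀ k, a k * x 0 + b k = x k.castSucc)
    (hL1 : ∀ k, a k * x (Fin.last m) + b k = x k.succ) :
    ⋃ k, (a k * · + b k) '' Icc (x 0) (x (Fin.last m)) = Icc (x 0) (x (Fin.last m)) := by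
  simp_rw [image_affine_Icc' (ha _), hL0, hL1]
  exact hx.iUnion_Icc_castSucc_succ

theorem exists_fractalInterpolation_of_affine (hx : StrictMono x) (ha : ∀ k, 0 < a k)
    (hL0 : ∀ k, a k * x 0 + b k = x k.castSucc)
    (hL1 : ∀ k, a k * x (Fin.last m) + b k = x k.succ) {F : Fin m → ℝ → ℝ → ℝ}
    (hFA : ∀ k, F k (x 0) (y 0) = y k.castSucc)
    (hFB : ∀ k, F k (x (Fin.last m)) (y (Fin.last m)) = y k.succ)
    (hFc : ∀ k, Continuous (uncurry (F k))) {K : NNReal} (hK : K < 1)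
    (hF : ∀ k t, LipschitzWith K (F k t)) :
    ∃ g : ℝ → ℝ, ContinuousOn g (Icc (x 0) (x (Fin.last m))) ∧ (∀ i, g (x i) = y i) ∧
      ∀ k, ∀ t ∈ Icc (x 0) (x (Fin.last m)), g (a k * t + b k) = F k t (g t) := by
  have himage (k : Fin m) :
      (a k * · + b k) '' Icc (x 0) (x (Fin.last m)) = Icc (x k.castSucc) (x k.succ) := by
    rw [image_affine_Icc' (ha k), hL0, hL1]
  have hinv (k : Fin m) (t : ℝ) : (a k * t + b k - b k) / a k = t := by
    field_simp [(ha k).ne']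
    ring
  let ℓ k s := (s - b k) / a k
  have h : JoinUp x y ℓ F :=
    ⟨hx, fun k => by simp only [ℓ, ← hL0, hinv], fun k => by simp only [ℓ, ← hL1, hinv], hFA, hFB⟩
  have hℓm k : MapsTo (ℓ k) (Icc (x k.castSucc) (x k.succ)) (Icc (x 0) (x (Fin.last m))) := by
    rw [← himage k]
    rintro _ ⟨t, ht, rfl⟩
    simpa only [ℓ, hinv] using ht
  obtain ⟨g, hgc, hgA, hgB, hfix⟩ :=
    h.exists_fixedPoint_readBajraktarevic (fun k => by fun_prop) hℓm hFc hK hF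
  refine ⟨g, hgc, fun i => ?_, fun k t ht => ?_⟩
  · rw [hfix ⟨hx.monotone (Fin.zero_le i), hx.monotone (Fin.le_last i)⟩,
      h.readBajraktarevic_apply_node hgA hgB]
  · have hs : a k * t + b k ∈ Icc (x k.castSucc) (x k.succ) := himage k ▸ mem_image_of_mem _ ht
    have hsJ := Icc_subset_Icc (hx.monotone (Fin.zero_le _)) (hx.monotone (Fin.le_last _)) hs
    rw [hfix hsJ, h.readBajraktarevic_eq hgA hgB hs, rbPiece]
    simp only [ℓ, hinv]

end Affine

/-- In the affine FIF framework with `n + 2 ≥ 2` maps, there exists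
a continuous function `g : [x₀, x_N] → ℝ` interpolating the data (`g(x_k) = y_k` for
all `k`) whose graph `G = {(t, g t) : t ∈ [x₀, x_N]}` satisfies
`G = ⋃_k f_k(G)`, i.e. `G` is the attractor of the IFS `(f_k)_k`. -/
theorem fif_exists
    (n : ℕ) (x y : Fin (n + 3) → ℝ) (hx : StrictMono x)
    (d : Fin (n + 2) → ℝ) (hd : ∀ k, 0 ≤ d k ∧ d k < 1)
    (a b c e : Fin (n + 2) → ℝ)
    (ha : ∀ k, a k = (x k.succ - x k.castSucc) / (x (Fin.last (n + 2)) - x 0))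
    (hb : ∀ k, b k = (x (Fin.last (n + 2)) * x k.castSucc - x 0 * x k.succ) /
        (x (Fin.last (n + 2)) - x 0))
    (hc : ∀ k, c k = (y k.succ - y k.castSucc) / (x (Fin.last (n + 2)) - x 0) -
        d k * (y (Fin.last (n + 2)) - y 0) / (x (Fin.last (n + 2)) - x 0))
    (he : ∀ k, e k = (x (Fin.last (n + 2)) * y k.castSucc - x 0 * y k.succ) /
        (x (Fin.last (n + 2)) - x 0) -
        d k * (x (Fin.last (n + 2)) * y 0 - x 0 * y (Fin.last (n + 2))) /
        (x (Fin.last (n + 2)) - x 0))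
    (f : Fin (n + 2) → ℝ × ℝ → ℝ × ℝ)
    (hf : ∀ k (p : ℝ × ℝ), f k p = (a k * p.1 + b k, c k * p.1 + d k * p.2 + e k)) :
    ∃ g : ℝ → ℝ,
      ContinuousOn g (Set.Icc (x 0) (x (Fin.last (n + 2)))) ∧
      (∀ k : Fin (n + 3), g (x k) = y k) ∧
      (fun t => (t, g t)) '' Set.Icc (x 0) (x (Fin.last (n + 2))) =
        ⋃ k, f k '' ((fun t => (t, g t)) '' Set.Icc (x 0) (x (Fin.last (n + 2)))) := by
  have hlt : x 0 < x (Fin.last (n + 2)) := hx Fin.last_pos'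
  have hx_ends k := affine_two_point_eval hlt.ne (ha k) (hb k)
  -- `t ↦ c k * t + e k` is the chord through `(x₀, y_{k-1} - d_k y₀)` and `(xₙ, y_k - d_k yₙ)`.
  have hy_ends (k : Fin (n + 2)) := affine_two_point_eval hlt.ne (a := c k) (b := e k)
    (u := y k.castSucc - d k * y 0) (v := y k.succ - d k * y (Fin.last (n + 2)))
    (by rw [hc k]; ring) (by rw [he k]; ring)
  have ha_pos k : 0 < a k := by
    rw [ha k]
    exact div_pos (sub_pos.2 (hx Fin.castSucc_lt_succ)) (sub_pos.2 hlt)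
  obtain ⟨K, hK, hdK⟩ := exists_nnreal_lt_one_forall_le fun k => (hd k).2
  obtain ⟨g, hgc, hgx, hgL⟩ := exists_fractalInterpolation_of_affine (y := y)
    (F := fun k t u => c k * t + d k * u + e k) hx ha_pos
    (fun k => (hx_ends k).1) (fun k => (hx_ends k).2)
    (fun k => by linarith [(hy_ends k).1]) (fun k => by linarith [(hy_ends k).2])
    (fun k => by fun_prop) hK
    (fun k t => lipschitzWith_add_mul_add ((abs_of_nonneg (hd k).1).trans_le (hdK k)))
  refine ⟨g, hgc, hgx, image_graph_eq_iUnion_image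
    (iUnion_image_affine_Icc hx.monotone ha_pos (fun k => (hx_ends k).1) fun k => (hx_ends k).2)
    fun k t ht => ?_⟩
  rw [hf, hgL k t ht]
end

section
/- In the affine FIF framework with n ≥ 2 interpolation points, assume the indices are labeled so that s₁ ≤ s₂ ≤ … ≤ sₙ, where s_k = max{d_k, a_k + θ|c_k|}. Let M = max_{i,j∈{1,…,n}} ρ(γᵢ, γⱼ), where γ_k = (b_k/(1−a_k), b_k c_k/((1−a_k)(1−d_k)) + e_k/(1−d_k)). Define A = min{ min_{1≤k≤n−1} ( b_k c_k/((1−a_k)(1−d_k)) + e_k/(1−d_k) − M s_k (1+sₙ)/(θ(1−s_{n−1} sₙ)) ), bₙ cₙ/((1−aₙ)(1−dₙ)) + eₙ/(1−dₙ) − M sₙ (1+s_{n−1})/(θ(1−s_{n−1} sₙ)) } and B = max{ max_{1≤k≤n−1} ( b_k c_k/((1−a_k)(1−d_k)) + e_k/(1−d_k) + M s_k (1+sₙ)/(θ(1−s_{n−1} sₙ)) ), bₙ cₙ/((1−aₙ)(1−dₙ)) + eₙ/(1−dₙ) + M sₙ (1+s_{n−1})/(θ(1−s_{n−1} sₙ))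 }. If G is a nonempty compact subset of ℝ² with G = ⋃_{k=1}^{n} f_k(G) (in particular the graph of the affine fractal interpolation function f, so that the range of f is the set of second coordinates of G), then every (x,y) ∈ G satisfies A ≤ y ≤ B. -/
/-!
Each `f_k` contracts `ρ` by the factor `s_k` and fixes `γ_k`. Let `R_k` be the `ρ`-radius of the
piece `f_k(G)` about `γ_k`. Every point of `G` lies in some piece `f_j(G)`, so the triangle
inequality through `γ_j` gives `R_k ≤ s_k (M + max_j R_j)`; for the last index the term `j = n`
contributes only `s_n R_n`, and since `s_n < 1` this sharpens to `R_n ≤ s_n (M + max_{j<n} R_j)`.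
Solving this pair of linear inequalities gives `R_k (1 - s_{n-1} s_n) ≤ M s_k (1 + s_n)` for `k < n`
and `R_n (1 - s_{n-1} s_n) ≤ M s_n (1 + s_{n-1})`. Since `θ |y - (γ_k)₂| ≤ ρ((x, y), γ_k)`, these
radii bound the heights of the points of `f_k(G)` about `γ_k`.
-/

open Set

lemma le_mul_of_le_mul_max {σ w r : ℝ} (hσ0 : 0 ≤ σ) (hσ1 : σ < 1) (hr : 0 ≤ r)
    (h : w ≤ σ * max w r) : w ≤ σ * r := by
  rcases le_total w r with hwr | hrw
  · rwa [max_eq_right hwr] at h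
  · rw [max_eq_left hrw] at h
    nlinarith [mul_nonneg hσ0 hr]

lemma max_mul_one_sub_mul_le {τ σ M V w : ℝ} (hτ : 0 ≤ τ) (hτσ : τ ≤ σ) (hM : 0 ≤ M)
    (hV0 : 0 ≤ V) (hV : V ≤ τ * (M + max V w)) (hw : w ≤ σ * (M + V)) :
    max V w * (1 - τ * σ) ≤ σ * M * (1 + τ) := by
  rcases le_total w V with hwV | hVw
  · rw [max_eq_left hwV] at hV ⊢
    nlinarith [mul_le_mul_of_nonneg_left hV hτ, mul_nonneg hV0 (sub_nonneg.2 hτσ),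
      mul_nonneg hM (sub_nonneg.2 hτσ), mul_nonneg hτ hM]
  · rw [max_eq_right hVw] at hV ⊢
    nlinarith [mul_le_mul_of_nonneg_left hV (hτ.trans hτσ)]

lemma le_max_iSup_castSucc {n : ℕ} (g : Fin (n + 1) → ℝ) (k : Fin (n + 1)) :
    g k ≤ max (⨆ i : Fin n, g i.castSucc) (g (Fin.last n)) := by
  cases k using Fin.lastCases with
  | last => exact le_max_right _ _
  | cast i =>
    exact (le_ciSup (f := fun i : Fin n => g i.castSucc) (finite_range _).bddAbove i).trans
      (le_max_left _ _)

lemma min_iInf_castSucc_le {n : ℕ} (g : Fin (n + 1) → ℝ) (k : Fin (n + 1)) :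
    min (⨅ i : Fin n, g i.castSucc) (g (Fin.last n)) ≤ g k := by
  cases k using Fin.lastCases with
  | last => exact min_le_right _ _
  | cast i =>
    exact (min_le_left _ _).trans
      (ciInf_le (f := fun i : Fin n => g i.castSucc) (finite_range _).bddBelow i)

lemma mem_Icc_of_abs_sub_le {n : ℕ} {g t : Fin (n + 1) → ℝ} {y : ℝ} {k : Fin (n + 1)}
    (h : |y - g k| ≤ t k) :
    y ∈ Icc (min (⨅ i : Fin n, g i.castSucc - t i.castSucc) (g (Fin.last n) - t (Fin.last n)))
      (max (⨆ i : Fin n, g i.castSucc + t i.castSucc) (g (Fin.last n) + t (Fin.last n))) := by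
  obtain ⟨h₁, h₂⟩ := abs_le.1 h
  exact ⟨(min_iInf_castSucc_le (fun k => g k - t k) k).trans (by linarith),
    (by linarith : y ≤ g k + t k).trans (le_max_iSup_castSucc (fun k => g k + t k) k)⟩

section SelfSimilar

variable {α ι : Type*}

noncomputable def pieceRadius (ρ : α → α → ℝ) (f : ι → α → α) (γ : ι → α) (G : Set α) (k : ι) :
    ℝ :=
  ⨆ p : f k '' G, ρ p (γ k)

variable {ρ : α → α → ℝ} {f : ι → α → α} {γ : ι → α} {G : Set α}

lemma pieceRadius_nonneg (hρ : ∀ p q, 0 ≤ ρ p q) (k : ι) : 0 ≤ pieceRadius ρ f γ G k :=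
  Real.iSup_nonneg fun _ => hρ _ _

lemma le_pieceRadius (hG : G = ⋃ j, f j '' G) {k : ι} (hbdd : BddAbove ((ρ · (γ k)) '' G))
    {p : α} (hp : p ∈ f k '' G) : ρ p (γ k) ≤ pieceRadius ρ f γ G k := by
  refine le_ciSup (f := fun p : f k '' G => ρ p (γ k)) (hbdd.mono ?_) ⟨p, hp⟩
  rintro _ ⟨q, rfl⟩
  exact ⟨q, (subset_iUnion (fun j => f j '' G) k).trans hG.ge q.2, rfl⟩

lemma pieceRadius_le (hρ : ∀ p q r, ρ p r ≤ ρ p q + ρ q r) (hG : G = ⋃ j, f j '' G)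
    (hbdd : ∀ j, BddAbove ((ρ · (γ j)) '' G)) {k : ι} {s : ℝ} (hs : 0 ≤ s)
    (hf : ∀ p q, ρ (f k p) (f k q) ≤ s * ρ p q) (hγ : f k (γ k) = γ k) {r : ℝ} (hr : 0 ≤ r)
    (h : ∀ j, s * (pieceRadius ρ f γ G j + ρ (γ j) (γ k)) ≤ r) :
    pieceRadius ρ f γ G k ≤ r := by
  refine Real.iSup_le ?_ hr
  rintro ⟨_, q, hq, rfl⟩
  obtain ⟨j, hj⟩ := mem_iUnion.1 (hG.subset hq)
  calc ρ (f k q) (γ k) = ρ (f k q) (f k (γ k)) := by rw [hγ]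
    _ ≤ s * ρ q (γ k) := hf q (γ k)
    _ ≤ s * (pieceRadius ρ f γ G j + ρ (γ j) (γ k)) := by
      gcongr
      exact (hρ _ _ _).trans (add_le_add_left (le_pieceRadius hG (hbdd j) hj) _)
    _ ≤ r := h j

end SelfSimilar

lemma pieceRadius_mul_le {α : Type*} {ρ : α → α → ℝ} {G : Set α} {n : ℕ}
    {f : Fin (n + 2) → α → α} {γ : Fin (n + 2) → α} {s : Fin (n + 2) → ℝ} {τ σ M : ℝ}
    (hρ0 : ∀ p q, 0 ≤ ρ p q) (hρ : ∀ p, ρ p p = 0)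
    (hρtri : ∀ p q r, ρ p r ≤ ρ p q + ρ q r) (hG : G = ⋃ j, f j '' G)
    (hbdd : ∀ j, BddAbove ((ρ · (γ j)) '' G)) (hs0 : ∀ k, 0 ≤ s k)
    (hτ : ∀ i : Fin (n + 1), s i.castSucc ≤ τ) (hσ : s (Fin.last (n + 1)) = σ) (hτσ : τ ≤ σ)
    (hσ1 : σ < 1) (hf : ∀ k p q, ρ (f k p) (f k q) ≤ s k * ρ p q) (hγ : ∀ k, f k (γ k) = γ k)
    (hM : ∀ i j, ρ (γ i) (γ j) ≤ M) (k : Fin (n + 2)) :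
    pieceRadius ρ f γ G k * (1 - τ * σ) ≤
      Fin.lastCases (M * σ * (1 + τ)) (fun i => M * s i.castSucc * (1 + σ)) k := by
  set R := pieceRadius ρ f γ G
  set V := ⨆ i : Fin (n + 1), R i.castSucc
  set w := R (Fin.last (n + 1))
  have hR0 : ∀ k, 0 ≤ R k := pieceRadius_nonneg hρ0
  have hM0 : 0 ≤ M := (hρ0 _ _).trans (hM 0 0)
  have hτ0 : 0 ≤ τ := (hs0 0).trans (hτ 0)
  have hσ0 : 0 ≤ σ := hτ0.trans hτσ
  have hRV : ∀ i : Fin (n + 1), R i.castSucc ≤ V := le_ciSup (finite_range _).bddAbove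
  have hV0 : 0 ≤ V := (hR0 _).trans (hRV 0)
  have hU0 : 0 ≤ M + max V w := add_nonneg hM0 (hV0.trans (le_max_left _ _))
  have hR : ∀ k, R k ≤ s k * (M + max V w) := fun k =>
    pieceRadius_le hρtri hG hbdd (hs0 k) (hf k) (hγ k) (mul_nonneg (hs0 k) hU0) fun j =>
      mul_le_mul_of_nonneg_left (by linarith [le_max_iSup_castSucc R j, hM j k]) (hs0 k)
  have hV : V ≤ τ * (M + max V w) :=
    ciSup_le fun i => (hR _).trans (mul_le_mul_of_nonneg_right (hτ i) hU0)
  have hw : w ≤ σ * (M + V) := by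
    refine le_mul_of_le_mul_max hσ0 hσ1 (add_nonneg hM0 hV0) ?_
    refine pieceRadius_le hρtri hG hbdd (hσ ▸ hs0 _) (hσ ▸ hf _) (hγ _)
      (mul_nonneg hσ0 ((hR0 _).trans (le_max_left _ _))) fun j => ?_
    refine mul_le_mul_of_nonneg_left ?_ hσ0
    cases j using Fin.lastCases with
    | last => rw [hρ, add_zero]; exact le_max_left _ _
    | cast i =>
      exact le_max_of_le_right (by
        linarith [hRV i, hM i.castSucc (Fin.last (n + 1))])
  have hU := max_mul_one_sub_mul_le hτ0 hτσ hM0 hV0 hV hw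
  have h1 : 0 ≤ 1 - τ * σ := by nlinarith
  cases k using Fin.lastCases with
  | last =>
    rw [Fin.lastCases_last]
    nlinarith [mul_le_mul_of_nonneg_right (le_max_right V w) h1]
  | cast i =>
    rw [Fin.lastCases_castSucc]
    nlinarith [mul_le_mul_of_nonneg_right (hR i.castSucc) h1,
      mul_le_mul_of_nonneg_left hU (hs0 i.castSucc)]

def rho (θ : ℝ) (p q : ℝ × ℝ) : ℝ := |p.1 - q.1| + θ * |p.2 - q.2|

section Rho

variable {θ : ℝ}

lemma rho_self (p : ℝ × ℝ) : rho θ p p = 0 := by simp [rho]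

lemma rho_nonneg (hθ : 0 ≤ θ) (p q : ℝ × ℝ) : 0 ≤ rho θ p q := by unfold rho; positivity

lemma rho_triangle (hθ : 0 ≤ θ) (p q r : ℝ × ℝ) : rho θ p r ≤ rho θ p q + rho θ q r := by
  unfold rho
  nlinarith [abs_sub_le p.1 q.1 r.1, mul_le_mul_of_nonneg_left (abs_sub_le p.2 q.2 r.2) hθ]

lemma mul_abs_snd_sub_le_rho (p q : ℝ × ℝ) : θ * |p.2 - q.2| ≤ rho θ p q :=
  le_add_of_nonneg_left (abs_nonneg (p.1 - q.1))

lemma continuous_rho_left (q : ℝ × ℝ) : Continuous fun p => rho θ p q := by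
  unfold rho; fun_prop

end Rho

def fifMap (a b c d e : ℝ) (p : ℝ × ℝ) : ℝ × ℝ := (a * p.1 + b, c * p.1 + d * p.2 + e)

lemma rho_fifMap_le {θ a b c d e : ℝ} (hθ : 0 ≤ θ) (ha : 0 ≤ a) (hd : 0 ≤ d) (p q : ℝ × ℝ) :
    rho θ (fifMap a b c d e p) (fifMap a b c d e q) ≤ max d (a + θ * |c|) * rho θ p q := by
  have hx : |a * p.1 + b - (a * q.1 + b)| = a * |p.1 - q.1| := by
    rw [add_sub_add_right_eq_sub, ← mul_sub, abs_mul, abs_of_nonneg ha]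
  have hy : |c * p.1 + d * p.2 + e - (c * q.1 + d * q.2 + e)| ≤
      |c| * |p.1 - q.1| + d * |p.2 - q.2| := by
    calc _ = |c * (p.1 - q.1) + d * (p.2 - q.2)| := by ring_nf
      _ ≤ |c * (p.1 - q.1)| + |d * (p.2 - q.2)| := abs_add_le _ _
      _ = |c| * |p.1 - q.1| + d * |p.2 - q.2| := by rw [abs_mul, abs_mul, abs_of_nonneg hd]
  simp only [rho, fifMap]
  nlinarith [mul_le_mul_of_nonneg_left hy hθ, le_max_left d (a + θ * |c|),
    le_max_right d (a + θ * |c|), abs_nonneg (p.1 - q.1), mul_nonneg hθ (abs_nonneg (p.2 - q.2))]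

lemma fifMap_fixedPoint {a b c d e : ℝ} (ha : a ≠ 1) (hd : d ≠ 1) :
    fifMap a b c d e (b / (1 - a), b * c / ((1 - a) * (1 - d)) + e / (1 - d)) =
      (b / (1 - a), b * c / ((1 - a) * (1 - d)) + e / (1 - d)) := by
  have ha' : 1 - a ≠ 0 := sub_ne_zero.2 ha.symm
  have hd' : 1 - d ≠ 0 := sub_ne_zero.2 hd.symm
  simp only [fifMap, Prod.mk.injEq]
  constructor <;> field_simp <;> ring

noncomputable def fifTheta {ι : Type*} [Fintype ι] (a c : ι → ℝ) : ℝ :=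
  if ∀ k, c k = 0 then 1 else (1 - ⨆ k, a k) / (2 * ⨆ k, |c k|)

section FifTheta

variable {ι : Type*} [Fintype ι] {a c : ι → ℝ}

lemma fifTheta_pos (ha : ∀ k, a k < 1) : 0 < fifTheta a c := by
  unfold fifTheta
  split_ifs with h
  · exact one_pos
  · push Not at h
    obtain ⟨j, hj⟩ := h
    have : Nonempty ι := ⟨j⟩
    obtain ⟨k, hk⟩ := Finite.exists_max a
    have hA : ⨆ k, a k < 1 := (ciSup_le hk).trans_lt (ha k)
    have hC : 0 < ⨆ k, |c k| :=
      (abs_pos.2 hj).trans_le (le_ciSup (f := fun k => |c k|) (finite_range _).bddAbove j)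
    exact div_pos (by linarith) (by linarith)

lemma add_fifTheta_mul_abs_lt_one (ha : ∀ k, a k < 1) (k : ι) :
    a k + fifTheta a c * |c k| < 1 := by
  unfold fifTheta
  split_ifs with h
  · simpa [h k] using ha k
  · push Not at h
    obtain ⟨j, hj⟩ := h
    have : Nonempty ι := ⟨j⟩
    obtain ⟨m, hm⟩ := Finite.exists_max a
    have hA : ⨆ k, a k < 1 := (ciSup_le hm).trans_lt (ha m)
    have hak : a k ≤ ⨆ k, a k := le_ciSup (finite_range _).bddAbove k
    have hck : |c k| ≤ ⨆ k, |c k| := le_ciSup (f := fun k => |c k|) (finite_range _).bddAbove k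
    have hC : 0 < ⨆ k, |c k| := (abs_pos.2 hj).trans_le
      (le_ciSup (f := fun k => |c k|) (finite_range _).bddAbove j)
    have key : (1 - ⨆ k, a k) / (2 * ⨆ k, |c k|) * |c k| ≤ (1 - ⨆ k, a k) / 2 := by
      rw [div_mul_eq_mul_div, div_le_div_iff₀ (by linarith) (by norm_num)]
      nlinarith [abs_nonneg (c k)]
    linarith

end FifTheta

lemma StrictMono.succ_sub_castSucc_lt {n : ℕ} {x : Fin (n + 3) → ℝ} (hx : StrictMono x)
    (k : Fin (n + 2)) : x k.succ - x k.castSucc < x (Fin.last (n + 2)) - x 0 := by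
  have h0 : x 0 ≤ x k.castSucc := hx.monotone (Fin.zero_le _)
  have hl : x k.succ ≤ x (Fin.last (n + 2)) := hx.monotone (Fin.le_last _)
  rcases eq_or_ne k 0 with rfl | hk
  · have : x (0 : Fin (n + 2)).succ < x (Fin.last (n + 2)) := by
      apply hx
      simp [Fin.lt_def]
    linarith
  · have : x 0 < x k.castSucc := by
      apply hx
      rw [Fin.lt_def, Fin.val_zero, Fin.val_castSucc]
      exact Nat.pos_of_ne_zero (Fin.val_ne_iff.2 hk)
    linarith


lemma StrictMono.slope_mem_Ioo {n : ℕ} {x : Fin (n + 3) → ℝ} (hx : StrictMono x)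
    (k : Fin (n + 2)) :
    (x k.succ - x k.castSucc) / (x (Fin.last (n + 2)) - x 0) ∈ Ioo 0 1 := by
  have hL : 0 < x (Fin.last (n + 2)) - x 0 := sub_pos.2 (hx Fin.last_pos)
  exact ⟨div_pos (sub_pos.2 (hx k.castSucc_lt_succ)) hL,
    (div_lt_one hL).2 (hx.succ_sub_castSucc_lt k)⟩

noncomputable def rhombusHalfHeight {n : ℕ} (θ M : ℝ) (s : Fin (n + 2) → ℝ) (k : Fin (n + 2)) :
    ℝ :=
  Fin.lastCases (M * s (Fin.last (n + 1)) * (1 + s (Fin.last n).castSucc))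
      (fun i => M * s i.castSucc * (1 + s (Fin.last (n + 1)))) k /
    (θ * (1 - s (Fin.last n).castSucc * s (Fin.last (n + 1))))

lemma exists_abs_snd_sub_le_rhombusHalfHeight {n : ℕ} {θ M : ℝ}
    {f : Fin (n + 2) → ℝ × ℝ → ℝ × ℝ} {γ : Fin (n + 2) → ℝ × ℝ} {s : Fin (n + 2) → ℝ}
    {G : Set (ℝ × ℝ)} (hθ : 0 < θ) (hGc : IsCompact G) (hG : G = ⋃ j, f j '' G)
    (hs0 : ∀ k, 0 ≤ s k) (hmono : Monotone s) (hs1 : s (Fin.last (n + 1)) < 1)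
    (hf : ∀ k p q, rho θ (f k p) (f k q) ≤ s k * rho θ p q) (hγ : ∀ k, f k (γ k) = γ k)
    (hM : ∀ i j, rho θ (γ i) (γ j) ≤ M) {p : ℝ × ℝ} (hp : p ∈ G) :
    ∃ k, |p.2 - (γ k).2| ≤ rhombusHalfHeight θ M s k := by
  have hbdd : ∀ k, BddAbove ((rho θ · (γ k)) '' G) := fun k =>
    hGc.bddAbove_image (continuous_rho_left _).continuousOn
  have hτσ : s (Fin.last n).castSucc ≤ s (Fin.last (n + 1)) := hmono (Fin.le_last _)
  have h1 : 0 < 1 - s (Fin.last n).castSucc * s (Fin.last (n + 1)) := by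
    nlinarith [hs0 (Fin.last n).castSucc]
  obtain ⟨k, hk⟩ := mem_iUnion.1 (hG.subset hp)
  refine ⟨k, ?_⟩
  rw [rhombusHalfHeight, le_div_iff₀ (mul_pos hθ h1), ← mul_assoc, mul_comm _ θ]
  exact (mul_le_mul_of_nonneg_right ((mul_abs_snd_sub_le_rho _ _).trans
    (le_pieceRadius hG (hbdd k) hk)) h1.le).trans
    (pieceRadius_mul_le (rho_nonneg hθ.le) rho_self (rho_triangle hθ.le) hG hbdd hs0
      (fun i => hmono (Fin.castSucc_le_castSucc_iff.2 (Fin.le_last i))) rfl hτσ hs1 hf hγ hM k)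

theorem fif_range_estimate_general
    (n : ℕ) (x : Fin (n + 3) → ℝ) (hx : StrictMono x)
    (d : Fin (n + 2) → ℝ) (hd : ∀ k, 0 ≤ d k ∧ d k < 1)
    (a b c e : Fin (n + 2) → ℝ)
    (ha : ∀ k, a k = (x k.succ - x k.castSucc) / (x (Fin.last (n + 2)) - x 0))
    (θ : ℝ)
    (hθ : θ = if ∀ k, c k = 0 then 1 else (1 - ⨆ k, a k) / (2 * ⨆ k, |c k|))
    (f : Fin (n + 2) → ℝ × ℝ → ℝ × ℝ)
    (hf : ∀ k (p : ℝ × ℝ), f k p = (a k * p.1 + b k, c k * p.1 + d k * p.2 + e k))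
    (s : Fin (n + 2) → ℝ)
    (hs : ∀ k, s k = max (d k) (a k + θ * |c k|))
    (hmono : Monotone s)
    (γ : Fin (n + 2) → ℝ × ℝ)
    (hγ : ∀ k, γ k = (b k / (1 - a k),
        b k * c k / ((1 - a k) * (1 - d k)) + e k / (1 - d k)))
    (M : ℝ)
    (hM : M = ⨆ p : Fin (n + 2) × Fin (n + 2),
        (|(γ p.1).1 - (γ p.2).1| + θ * |(γ p.1).2 - (γ p.2).2|))
    (A B : ℝ)
    (hA : A = min
      (⨅ k : Fin (n + 1),
        (b k.castSucc * c k.castSucc /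
            ((1 - a k.castSucc) * (1 - d k.castSucc)) +
          e k.castSucc / (1 - d k.castSucc) -
          M * s k.castSucc * (1 + s (Fin.last (n + 1))) /
            (θ * (1 - s ((Fin.last n).castSucc) * s (Fin.last (n + 1))))))
      (b (Fin.last (n + 1)) * c (Fin.last (n + 1)) /
          ((1 - a (Fin.last (n + 1))) * (1 - d (Fin.last (n + 1)))) +
        e (Fin.last (n + 1)) / (1 - d (Fin.last (n + 1))) -
        M * s (Fin.last (n + 1)) * (1 + s ((Fin.last n).castSucc)) /
          (θ * (1 - s ((Fin.last n).castSucc) * s (Fin.last (n + 1))))))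
    (hB : B = max
      (⨆ k : Fin (n + 1),
        (b k.castSucc * c k.castSucc /
            ((1 - a k.castSucc) * (1 - d k.castSucc)) +
          e k.castSucc / (1 - d k.castSucc) +
          M * s k.castSucc * (1 + s (Fin.last (n + 1))) /
            (θ * (1 - s ((Fin.last n).castSucc) * s (Fin.last (n + 1))))))
      (b (Fin.last (n + 1)) * c (Fin.last (n + 1)) /
          ((1 - a (Fin.last (n + 1))) * (1 - d (Fin.last (n + 1)))) +
        e (Fin.last (n + 1)) / (1 - d (Fin.last (n + 1))) +
        M * s (Fin.last (n + 1)) * (1 + s ((Fin.last n).castSucc)) /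
          (θ * (1 - s ((Fin.last n).castSucc) * s (Fin.last (n + 1))))))
    (G : Set (ℝ × ℝ)) (hGc : IsCompact G)
    (hGfix : G = ⋃ k, f k '' G) :
    ∀ p ∈ G, A ≤ p.2 ∧ p.2 ≤ B := by
  have ha01 : ∀ k, a k ∈ Ioo 0 1 := fun k => ha k ▸ hx.slope_mem_Ioo k
  -- the two `if`s differ only in their `Decidable` instances
  replace hθ : θ = fifTheta a c := by rw [hθ, fifTheta]; congr
  have hθ0 : 0 < θ := hθ ▸ fifTheta_pos fun k => (ha01 k).2
  have hs01 : ∀ k, 0 ≤ s k ∧ s k < 1 := fun k => by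
    rw [hs k]
    exact ⟨(hd k).1.trans (le_max_left _ _),
      max_lt (hd k).2 (hθ ▸ add_fifTheta_mul_abs_lt_one (fun k => (ha01 k).2) k)⟩
  intro p hp
  obtain ⟨k, hy⟩ := exists_abs_snd_sub_le_rhombusHalfHeight hθ0 hGc hGfix (fun k => (hs01 k).1)
    hmono (hs01 _).2
    (fun k p q => by rw [hf, hf, hs]; exact rho_fifMap_le hθ0.le (ha01 k).1.le (hd k).1 p q)
    (fun k => by rw [hγ, hf]; exact fifMap_fixedPoint (ha01 k).2.ne (hd k).2.ne)
    (fun i j => hM ▸ le_ciSup (f := fun p : Fin (n + 2) × Fin (n + 2) => rho θ (γ p.1) (γ p.2))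
      (finite_range _).bddAbove (i, j)) hp
  rw [hγ] at hy
  rw [hA, hB]
  simpa only [rhombusHalfHeight, Fin.lastCases_last, Fin.lastCases_castSucc, mem_Icc] using
    mem_Icc_of_abs_sub_le (g := fun k => b k * c k / ((1 - a k) * (1 - d k)) + e k / (1 - d k))
      (t := rhombusHalfHeight θ M s) hy

/-- (Range estimate for a FIF.)  In the affine FIF framework with
`n + 2 ≥ 2` maps, indices labeled so that `s_k = max{d_k, a_k + θ|c_k|}` is
nondecreasing, fixed points `γ_k`, `M = max_{i,j} ρ(γ_i, γ_j)`, and `A`, `B` defined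
as the min/max over `k` of the second coordinates of the fixed points shifted down/up
by the corresponding rhombus half-heights:  every nonempty compact `G ⊆ ℝ²` with
`G = ⋃_k f_k(G)` (in particular the graph of the FIF, so that `Im f ⊆ [A,B]`)
satisfies `A ≤ y ≤ B` for all `(x,y) ∈ G`. -/
theorem fif_range_estimate
    (n : ℕ) (x y : Fin (n + 3) → ℝ) (hx : StrictMono x)
    (d : Fin (n + 2) → ℝ) (hd : ∀ k, 0 ≤ d k ∧ d k < 1)
    (a b c e : Fin (n + 2) → ℝ)
    (ha : ∀ k, a k = (x k.succ - x k.castSucc) / (x (Fin.last (n + 2)) - x 0))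
    (hb : ∀ k, b k = (x (Fin.last (n + 2)) * x k.castSucc - x 0 * x k.succ) /
        (x (Fin.last (n + 2)) - x 0))
    (hc : ∀ k, c k = (y k.succ - y k.castSucc) / (x (Fin.last (n + 2)) - x 0) -
        d k * (y (Fin.last (n + 2)) - y 0) / (x (Fin.last (n + 2)) - x 0))
    (he : ∀ k, e k = (x (Fin.last (n + 2)) * y k.castSucc - x 0 * y k.succ) /
        (x (Fin.last (n + 2)) - x 0) -
        d k * (x (Fin.last (n + 2)) * y 0 - x 0 * y (Fin.last (n + 2))) /
        (x (Fin.last (n + 2)) - x 0))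
    (θ : ℝ)
    (hθ : θ = if ∀ k, c k = 0 then 1 else (1 - ⨆ k, a k) / (2 * ⨆ k, |c k|))
    (f : Fin (n + 2) → ℝ × ℝ → ℝ × ℝ)
    (hf : ∀ k (p : ℝ × ℝ), f k p = (a k * p.1 + b k, c k * p.1 + d k * p.2 + e k))
    (s : Fin (n + 2) → ℝ)
    (hs : ∀ k, s k = max (d k) (a k + θ * |c k|))
    (hmono : Monotone s)
    (γ : Fin (n + 2) → ℝ × ℝ)
    (hγ : ∀ k, γ k = (b k / (1 - a k),
        b k * c k / ((1 - a k) * (1 - d k)) + e k / (1 - d k)))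
    (M : ℝ)
    (hM : M = ⨆ p : Fin (n + 2) × Fin (n + 2),
        (|(γ p.1).1 - (γ p.2).1| + θ * |(γ p.1).2 - (γ p.2).2|))
    (A B : ℝ)
    (hA : A = min
      (⨅ k : Fin (n + 1),
        (b k.castSucc * c k.castSucc /
            ((1 - a k.castSucc) * (1 - d k.castSucc)) +
          e k.castSucc / (1 - d k.castSucc) -
          M * s k.castSucc * (1 + s (Fin.last (n + 1))) /
            (θ * (1 - s ((Fin.last n).castSucc) * s (Fin.last (n + 1))))))
      (b (Fin.last (n + 1)) * c (Fin.last (n + 1)) /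
          ((1 - a (Fin.last (n + 1))) * (1 - d (Fin.last (n + 1)))) +
        e (Fin.last (n + 1)) / (1 - d (Fin.last (n + 1))) -
        M * s (Fin.last (n + 1)) * (1 + s ((Fin.last n).castSucc)) /
          (θ * (1 - s ((Fin.last n).castSucc) * s (Fin.last (n + 1))))))
    (hB : B = max
      (⨆ k : Fin (n + 1),
        (b k.castSucc * c k.castSucc /
            ((1 - a k.castSucc) * (1 - d k.castSucc)) +
          e k.castSucc / (1 - d k.castSucc) +
          M * s k.castSucc * (1 + s (Fin.last (n + 1))) /
            (θ * (1 - s ((Fin.last n).castSucc) * s (Fin.last (n + 1))))))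
      (b (Fin.last (n + 1)) * c (Fin.last (n + 1)) /
          ((1 - a (Fin.last (n + 1))) * (1 - d (Fin.last (n + 1)))) +
        e (Fin.last (n + 1)) / (1 - d (Fin.last (n + 1))) +
        M * s (Fin.last (n + 1)) * (1 + s ((Fin.last n).castSucc)) /
          (θ * (1 - s ((Fin.last n).castSucc) * s (Fin.last (n + 1))))))
    (G : Set (ℝ × ℝ)) (hG : G.Nonempty) (hGc : IsCompact G)
    (hGfix : G = ⋃ k, f k '' G) :
    ∀ p ∈ G, A ≤ p.2 ∧ p.2 ≤ B :=
  fif_range_estimate_general n x hx d hd a b c e ha θ hθ f hf s hs hmono γ hγ M hM A B hA hB G hGc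
    hGfix
end
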